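/- Let μ > 0, B ≥ 2 an integer, and 0 < τ_{B−1} ≤ τ_{B−2} ≤ … ≤ τ_1 < ∞. Define the B×B matrix P, with rows and columns indexed by {0,…,B−1}, by P_{j,B−1} = G_{B−j}(τ_{B−1}) and P_{j,i} = G_{1+i−j}(τ_i) − G_{2+i−j}(τ_{i+1}) for 0 ≤ i < B−1. Then all entries of P are nonnegative; moreover P_{j,i} > 0 whenever i ≥ j, and for every j ≥ 1 one has P_{j,j−1} = e^{−μ τ_j} > 0. -/

import Mathlib

/-!
Write `G_m(t) = 1 - Q_m(μ t)`, where `Q_n(x) = e^{-x} ∑_{k<n} x^k / k!` is the probability that a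
Poisson variable of mean `x` is smaller than `n`. Then `Q_n(x)` lies in `[0, 1]`, increases with `n`
(strictly, by the positive term `e^{-x} x^n / n!`, when `x > 0`) and decreases with `x`, since its
derivative in `x` is `-e^{-x} x^{n-1} / (n-1)!`. Hence `G_m(t)` increases in `t`, decreases in `m`, and
`G_{m'}(s) ≤ G_m(t)` whenever `m ≤ m'` and `s ≤ t`, strictly if `m < m'`, `0 ≤ m` and `t > 0`.
Because the thresholds decrease, each entry `G_{1+i-j}(τ_i) - G_{2+i-j}(τ_{i+1})` is of this form,
and on the subdiagonal it reduces to `G_0(τ_{j-1}) - G_1(τ_j) = e^{-μ τ_j}`.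
-/

/-- The Erlang CDF `G_m` with rate `μ` and (integer) stage parameter `m`:
`G_m(t) = 1 - e^(-μt) ∑_{k=0}^{m-1} (μt)^k / k!` for `t ≥ 0` and `m ≥ 1`,
with the conventions `G_m(t) = 0` for `t < 0` and `G_m(t) = 1` for `t ≥ 0` when `m ≤ 0`. -/
noncomputable def erlangCDF (μ : ℝ) (m : ℤ) (t : ℝ) : ℝ :=
  if t < 0 then 0
  else if m ≤ 0 then 1
  else 1 - Real.exp (-(μ * t)) *
    ∑ k ∈ Finset.range m.toNat, (μ * t) ^ k / (Nat.factorial k : ℝ)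

open Finset Real

noncomputable def poissonProbLT (n : ℕ) (x : ℝ) : ℝ :=
  exp (-x) * ∑ k ∈ range n, x ^ k / (k.factorial : ℝ)

namespace poissonProbLT

@[simp]
lemma zero (x : ℝ) : poissonProbLT 0 x = 0 := by
  simp [poissonProbLT]

@[simp]
lemma one (x : ℝ) : poissonProbLT 1 x = exp (-x) := by
  simp [poissonProbLT]

lemma succ (n : ℕ) (x : ℝ) :
    poissonProbLT (n + 1) x = poissonProbLT n x + exp (-x) * (x ^ n / (n.factorial : ℝ)) := by
  rw [poissonProbLT, poissonProbLT, sum_range_succ, mul_add]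

lemma nonneg (n : ℕ) {x : ℝ} (hx : 0 ≤ x) : 0 ≤ poissonProbLT n x := by
  unfold poissonProbLT
  positivity

lemma le_one (n : ℕ) {x : ℝ} (hx : 0 ≤ x) : poissonProbLT n x ≤ 1 :=
  calc poissonProbLT n x ≤ exp (-x) * exp x :=
        mul_le_mul_of_nonneg_left (sum_le_exp_of_nonneg hx n) (exp_pos _).le
    _ = 1 := by rw [← exp_add, neg_add_cancel, exp_zero]

lemma lt_succ (n : ℕ) {x : ℝ} (hx : 0 < x) : poissonProbLT n x < poissonProbLT (n + 1) x := by
  rw [succ]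
  have : 0 < exp (-x) * (x ^ n / (n.factorial : ℝ)) := by positivity
  linarith

lemma lt_one (n : ℕ) {x : ℝ} (hx : 0 < x) : poissonProbLT n x < 1 :=
  (lt_succ n hx).trans_le (le_one _ hx.le)

lemma monotone {x : ℝ} (hx : 0 ≤ x) : Monotone fun n => poissonProbLT n x :=
  monotone_nat_of_le_succ fun n => by
    rw [succ]
    have : 0 ≤ exp (-x) * (x ^ n / (n.factorial : ℝ)) := by positivity
    linarith

lemma hasDerivAt_succ (n : ℕ) (x : ℝ) :
    HasDerivAt (poissonProbLT (n + 1)) (-(exp (-x) * (x ^ n / (n.factorial : ℝ)))) x := by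
  induction n with
  | zero =>
    rw [funext one]
    simpa using (hasDerivAt_neg x).exp
  | succ n ih =>
    have hterm := (hasDerivAt_neg x).exp.fun_mul ((hasDerivAt_pow (n + 1) x).div_const
      ((n + 1).factorial : ℝ))
    rw [funext (succ (n + 1))]
    refine (ih.add hterm).congr_deriv ?_
    rw [Nat.add_sub_cancel, Nat.factorial_succ, Nat.cast_mul]
    field_simp
    push_cast
    ring

lemma antitoneOn (n : ℕ) : AntitoneOn (poissonProbLT n) (Set.Ici 0) := by
  cases n with
  | zero => simp [AntitoneOn]
  | succ n =>
    refine antitoneOn_of_deriv_nonpos (convex_Ici 0)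
      (fun x _ => (hasDerivAt_succ n x).continuousAt.continuousWithinAt)
      (fun x _ => (hasDerivAt_succ n x).differentiableAt.differentiableWithinAt) fun x hx => ?_
    rw [interior_Ici, Set.mem_Ioi] at hx
    rw [(hasDerivAt_succ n x).deriv, neg_nonpos]
    positivity

end poissonProbLT

section erlangCDF

variable {μ : ℝ} {m m' : ℤ} {s t : ℝ}

lemma erlangCDF_of_neg (ht : t < 0) : erlangCDF μ m t = 0 :=
  if_pos ht

lemma erlangCDF_of_nonneg (ht : 0 ≤ t) :
    erlangCDF μ m t = 1 - poissonProbLT m.toNat (μ * t) := by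
  rw [erlangCDF, if_neg ht.not_gt, poissonProbLT]
  split_ifs with hm
  · simp [Int.toNat_of_nonpos hm]
  · rfl

lemma erlangCDF_of_nonpos (hm : m ≤ 0) (ht : 0 ≤ t) : erlangCDF μ m t = 1 := by
  simp [erlangCDF_of_nonneg ht, Int.toNat_of_nonpos hm]

lemma erlangCDF_one (ht : 0 ≤ t) : erlangCDF μ 1 t = 1 - exp (-(μ * t)) := by
  simp [erlangCDF_of_nonneg ht]

lemma erlangCDF_nonneg (hμ : 0 ≤ μ) (m : ℤ) (t : ℝ) : 0 ≤ erlangCDF μ m t := by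
  rcases lt_or_ge t 0 with ht | ht
  · rw [erlangCDF_of_neg ht]
  · rw [erlangCDF_of_nonneg ht, sub_nonneg]
    exact poissonProbLT.le_one _ (mul_nonneg hμ ht)

lemma erlangCDF_le_one (hμ : 0 ≤ μ) (m : ℤ) (t : ℝ) : erlangCDF μ m t ≤ 1 := by
  rcases lt_or_ge t 0 with ht | ht
  · rw [erlangCDF_of_neg ht]
    exact zero_le_one
  · rw [erlangCDF_of_nonneg ht, sub_le_self_iff]
    exact poissonProbLT.nonneg _ (mul_nonneg hμ ht)

lemma erlangCDF_monotone (hμ : 0 ≤ μ) (m : ℤ) : Monotone (erlangCDF μ m) := by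
  intro s t hst
  rcases lt_or_ge s 0 with hs | hs
  · rw [erlangCDF_of_neg hs]
    exact erlangCDF_nonneg hμ m t
  · rw [erlangCDF_of_nonneg hs, erlangCDF_of_nonneg (hs.trans hst), sub_le_sub_iff_left]
    exact poissonProbLT.antitoneOn _ (Set.mem_Ici.2 (mul_nonneg hμ hs))
      (Set.mem_Ici.2 (mul_nonneg hμ (hs.trans hst))) (mul_le_mul_of_nonneg_left hst hμ)

lemma erlangCDF_antitone_stage (hμ : 0 ≤ μ) (t : ℝ) : Antitone fun m => erlangCDF μ m t := by
  intro m m' hm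
  rcases lt_or_ge t 0 with ht | ht
  · simp only [erlangCDF_of_neg ht, le_refl]
  · simp only [erlangCDF_of_nonneg ht, sub_le_sub_iff_left]
    exact poissonProbLT.monotone (mul_nonneg hμ ht) (Int.toNat_le_toNat hm)

lemma erlangCDF_succ_lt (hμ : 0 < μ) (hm : 0 ≤ m) (ht : 0 < t) :
    erlangCDF μ (m + 1) t < erlangCDF μ m t := by
  have hsucc : (m + 1).toNat = m.toNat + 1 := by omega
  rw [erlangCDF_of_nonneg ht.le, erlangCDF_of_nonneg ht.le, hsucc, sub_lt_sub_iff_left]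
  exact poissonProbLT.lt_succ _ (mul_pos hμ ht)

lemma erlangCDF_le_erlangCDF (hμ : 0 ≤ μ) (hm : m ≤ m') (hst : s ≤ t) :
    erlangCDF μ m' s ≤ erlangCDF μ m t :=
  (erlangCDF_monotone hμ m' hst).trans (erlangCDF_antitone_stage hμ t hm)

lemma erlangCDF_lt_erlangCDF (hμ : 0 < μ) (hm : 0 ≤ m) (hm' : m < m') (ht : 0 < t)
    (hst : s ≤ t) : erlangCDF μ m' s < erlangCDF μ m t :=
  (erlangCDF_le_erlangCDF hμ.le hm' hst).trans_lt (erlangCDF_succ_lt hμ hm ht)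

lemma erlangCDF_pos (hμ : 0 < μ) (m : ℤ) (ht : 0 < t) : 0 < erlangCDF μ m t := by
  rw [erlangCDF_of_nonneg ht.le, sub_pos]
  exact poissonProbLT.lt_one _ (mul_pos hμ ht)

lemma erlangCDF_lt_one (hμ : 0 < μ) (hm : 0 < m) (ht : 0 < t) : erlangCDF μ m t < 1 := by
  simpa [erlangCDF_of_nonpos le_rfl ht.le] using erlangCDF_lt_erlangCDF hμ le_rfl hm ht le_rfl

end erlangCDF

lemma antitoneOn_Icc_of_succ_le {β : Type*} [Preorder β] {f : ℕ → β} {a b : ℕ}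
    (h : ∀ n, a ≤ n → n + 1 ≤ b → f (n + 1) ≤ f n) : AntitoneOn f (Set.Icc a b) :=
  antitoneOn_of_succ_le Set.ordConnected_Icc fun n _ hn hsucc =>
    h n hn.1 (by simpa [Order.succ_eq_add_one] using hsucc.2)

theorem transition_matrix_entries_general (μ : ℝ) (hμ : 0 < μ) (B : ℕ)
    (τ : ℕ → ℝ) (hpos : 0 < τ (B - 1))
    (hmono : ∀ m, 1 ≤ m → m + 1 ≤ B - 1 → τ (m + 1) ≤ τ m)
    (P : Matrix (Fin B) (Fin B) ℝ)
    (hP : ∀ j i : Fin B, P j i =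
      if (i : ℕ) = B - 1 then erlangCDF μ ((B : ℤ) - ((j : ℕ) : ℤ)) (τ (B - 1))
      else if (i : ℕ) = 0 then 1 - erlangCDF μ (2 - ((j : ℕ) : ℤ)) (τ 1)
      else erlangCDF μ (1 + ((i : ℕ) : ℤ) - ((j : ℕ) : ℤ)) (τ (i : ℕ))
        - erlangCDF μ (2 + ((i : ℕ) : ℤ) - ((j : ℕ) : ℤ)) (τ ((i : ℕ) + 1))) :
    (∀ j i : Fin B, 0 ≤ P j i) ∧
    (∀ j i : Fin B, (j : ℕ) ≤ (i : ℕ) → 0 < P j i) ∧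
    (∀ j : Fin B, 1 ≤ (j : ℕ) →
      P j ⟨(j : ℕ) - 1, lt_of_le_of_lt (Nat.sub_le _ _) j.isLt⟩
          = Real.exp (-(μ * τ (j : ℕ))) ∧
        0 < Real.exp (-(μ * τ (j : ℕ)))) := by
  have hτ : ∀ a, 1 ≤ a → a ≤ B - 1 → 0 < τ a := fun a ha1 ha2 =>
    hpos.trans_le (antitoneOn_Icc_of_succ_le hmono ⟨ha1, ha2⟩ ⟨by omega, le_rfl⟩ ha2)
  refine ⟨fun j i => ?_, fun j i hji => ?_, fun j hj => ⟨?_, exp_pos _⟩⟩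
  · rw [hP]
    split_ifs
    · exact erlangCDF_nonneg hμ.le _ _
    · exact sub_nonneg.2 (erlangCDF_le_one hμ.le _ _)
    · exact sub_nonneg.2 (erlangCDF_le_erlangCDF hμ.le (by omega) (hmono _ (by omega) (by omega)))
  · rw [hP]
    split_ifs
    · exact erlangCDF_pos hμ _ hpos
    · exact sub_pos.2 (erlangCDF_lt_one hμ (by omega) (hτ 1 le_rfl (by omega)))
    · exact sub_pos.2 (erlangCDF_lt_erlangCDF hμ (by omega) (by omega) (hτ i (by omega) (by omega))
        (hmono i (by omega) (by omega)))
  · rw [hP, Fin.val_mk]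
    split_ifs
    · omega
    · rw [show (2 : ℤ) - ((j : ℕ) : ℤ) = 1 by omega, erlangCDF_one (hτ 1 le_rfl (by omega)).le,
        show (j : ℕ) = 1 by omega]
      ring
    · rw [erlangCDF_of_nonpos (by omega) (hτ _ (by omega) (by omega)).le,
        show (2 : ℤ) + (((j : ℕ) - 1 : ℕ) : ℤ) - ((j : ℕ) : ℤ) = 1 by omega,
        show (j : ℕ) - 1 + 1 = j by omega,
        erlangCDF_one (hτ _ hj (by omega)).le]
      ring

/-- For `μ > 0`, integer `B ≥ 2` and thresholds
`0 < τ (B-1) ≤ τ (B-2) ≤ … ≤ τ 1 < ∞`, the `B × B` transition matrix `P` given by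
`P j (B-1) = G_{B-j}(τ (B-1))` and `P j i = G_{1+i-j}(τ i) - G_{2+i-j}(τ (i+1))` for
`0 ≤ i < B-1` (where, for `i = 0`, the convention `τ 0 = +∞` makes the first term equal `1`)
has nonnegative entries, `P j i > 0` whenever `i ≥ j`, and for every `j ≥ 1`,
`P j (j-1) = e^(-μ τ j) > 0`. -/
theorem transition_matrix_entries (μ : ℝ) (hμ : 0 < μ) (B : ℕ) (hB : 2 ≤ B)
    (τ : ℕ → ℝ) (hpos : 0 < τ (B - 1))
    (hmono : ∀ m, 1 ≤ m → m + 1 ≤ B - 1 → τ (m + 1) ≤ τ m)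
    (P : Matrix (Fin B) (Fin B) ℝ)
    (hP : ∀ j i : Fin B, P j i =
      if (i : ℕ) = B - 1 then erlangCDF μ ((B : ℤ) - ((j : ℕ) : ℤ)) (τ (B - 1))
      else if (i : ℕ) = 0 then 1 - erlangCDF μ (2 - ((j : ℕ) : ℤ)) (τ 1)
      else erlangCDF μ (1 + ((i : ℕ) : ℤ) - ((j : ℕ) : ℤ)) (τ (i : ℕ))
        - erlangCDF μ (2 + ((i : ℕ) : ℤ) - ((j : ℕ) : ℤ)) (τ ((i : ℕ) + 1))) :
    (∀ j i : Fin B, 0 ≤ P j i) ∧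
    (∀ j i : Fin B, (j : ℕ) ≤ (i : ℕ) → 0 < P j i) ∧
    (∀ j : Fin B, 1 ≤ (j : ℕ) →
      P j ⟨(j : ℕ) - 1, lt_of_le_of_lt (Nat.sub_le _ _) j.isLt⟩
          = Real.exp (-(μ * τ (j : ℕ))) ∧
        0 < Real.exp (-(μ * τ (j : ℕ)))) :=
  transition_matrix_entries_general μ hμ B τ hpos hmono P hP
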